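/- Let Φ be a flow on X, A ⊆ X an open set, and suppose E_A(x₁) = E_A(x₂) for points x₁ ≠ x₂ in the domain of the first-out map E_A. Then x₁ or x₂ is a fixed point of E_A (i.e., its first exit time is 0). -/

import Mathlib

/-!
If `T₁ ≤ T₂` are the exit times of `x₁ ≠ x₂` and both orbits exit at the same point, then
flowing back shows `Φ (T₂ - T₁) x₂ = x₁`, with `T₂ - T₁ > 0` since `x₁ ≠ x₂`. A frontier point of
an open set lies outside it, so `T₂ - T₁` is itself an exit time of `x₂`; hence `T₂ ≤ T₂ - T₁`,
i.e. `T₁ = 0`.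
-/

section Flow

variable {X : Type*} {Φ : ℝ → X → X}

/-- The first exit time `T_A^e`; it is `0` by convention when the orbit never leaves `A`. -/
noncomputable def firstExitTime (Φ : ℝ → X → X) (A : Set X) (x : X) : ℝ :=
  sInf {t : ℝ | 0 < t ∧ Φ t x ∉ A}

theorem firstExitTime_nonneg (A : Set X) (x : X) : 0 ≤ firstExitTime Φ A x :=
  Real.sInf_nonneg fun _ ht => ht.1.le

theorem firstExitTime_le {A : Set X} {x : X} {t : ℝ} (ht : 0 < t) (hx : Φ t x ∉ A) :
    firstExitTime Φ A x ≤ t :=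
  csInf_le ⟨0, fun _ hs => hs.1.le⟩ ⟨ht, hx⟩

theorem flow_sub_eq_of_eq (hid : ∀ x, Φ 0 x = x) (hgrp : ∀ s t x, Φ (s + t) x = Φ s (Φ t x))
    {s t : ℝ} {x y : X} (h : Φ s x = Φ t y) : Φ (t - s) y = x :=
  calc Φ (t - s) y = Φ (-s) (Φ t y) := by rw [← hgrp, neg_add_eq_sub]
    _ = Φ (-s) (Φ s x) := by rw [h]
    _ = x := by rw [← hgrp, neg_add_cancel, hid]

theorem firstExitTime_eq_zero_of_le (hid : ∀ x, Φ 0 x = x)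
    (hgrp : ∀ s t x, Φ (s + t) x = Φ s (Φ t x)) {A : Set X} {x₁ x₂ : X} (hx₁ : x₁ ∉ A)
    (hx : x₁ ≠ x₂) (hle : firstExitTime Φ A x₁ ≤ firstExitTime Φ A x₂)
    (heq : Φ (firstExitTime Φ A x₁) x₁ = Φ (firstExitTime Φ A x₂) x₂) :
    firstExitTime Φ A x₁ = 0 := by
  set T₁ := firstExitTime Φ A x₁
  set T₂ := firstExitTime Φ A x₂
  have hback : Φ (T₂ - T₁) x₂ = x₁ := flow_sub_eq_of_eq hid hgrp heq
  have hlt : T₁ < T₂ := by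
    refine hle.lt_of_ne fun hT => hx ?_
    rw [← hback, hT, sub_self, hid]
  have hT₂ : T₂ ≤ T₂ - T₁ := firstExitTime_le (sub_pos.2 hlt) (hback ▸ hx₁)
  linarith [firstExitTime_nonneg (Φ := Φ) A x₁]

end Flow

theorem stmt_3_general {X : Type*} [TopologicalSpace X] (Φ : ℝ → X → X)
    (hid : ∀ x, Φ 0 x = x)
    (hgrp : ∀ s t x, Φ (s + t) x = Φ s (Φ t x))
    (A : Set X) (hA : IsOpen A) (x₁ x₂ : X)
    (hx₁ : x₁ ∈ frontier A) (hx₂ : x₂ ∈ frontier A)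
    (hx : x₁ ≠ x₂)
    (heq : Φ (sInf {t : ℝ | 0 < t ∧ Φ t x₁ ∉ A}) x₁ =
           Φ (sInf {t : ℝ | 0 < t ∧ Φ t x₂ ∉ A}) x₂) :
    sInf {t : ℝ | 0 < t ∧ Φ t x₁ ∉ A} = 0 ∨
    sInf {t : ℝ | 0 < t ∧ Φ t x₂ ∉ A} = 0 := by
  have hA₁ : x₁ ∉ A := (hA.frontier_eq ▸ hx₁).2
  have hA₂ : x₂ ∉ A := (hA.frontier_eq ▸ hx₂).2
  rcases le_total (firstExitTime Φ A x₁) (firstExitTime Φ A x₂) with h | h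
  · exact Or.inl (firstExitTime_eq_zero_of_le hid hgrp hA₁ hx h heq)
  · exact Or.inr (firstExitTime_eq_zero_of_le hid hgrp hA₂ hx.symm h heq.symm)

/-- If two distinct points of the domain of the first-out map `E_A` have the
same image, then one of them is a fixed point of `E_A`, i.e. has first exit
time `0`. -/
theorem stmt_3 {X : Type*} [TopologicalSpace X] (Φ : ℝ → X → X)
    (hcont : Continuous fun p : ℝ × X => Φ p.1 p.2)
    (hid : ∀ x, Φ 0 x = x)
    (hgrp : ∀ s t x, Φ (s + t) x = Φ s (Φ t x))
    (A : Set X) (hA : IsOpen A) (x₁ x₂ : X)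
    (hx₁ : x₁ ∈ frontier A) (hx₂ : x₂ ∈ frontier A)
    (hne₁ : {t : ℝ | 0 < t ∧ Φ t x₁ ∉ A}.Nonempty)
    (hne₂ : {t : ℝ | 0 < t ∧ Φ t x₂ ∉ A}.Nonempty)
    (hx : x₁ ≠ x₂)
    (heq : Φ (sInf {t : ℝ | 0 < t ∧ Φ t x₁ ∉ A}) x₁ =
           Φ (sInf {t : ℝ | 0 < t ∧ Φ t x₂ ∉ A}) x₂) :
    sInf {t : ℝ | 0 < t ∧ Φ t x₁ ∉ A} = 0 ∨
    sInf {t : ℝ | 0 < t ∧ Φ t x₂ ∉ A} = 0 :=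
  stmt_3_general Φ hid hgrp A hA x₁ x₂ hx₁ hx₂ hx heq
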